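/- Let G := Γ^k be the Hahn group over a linearly ordered set Γ with exponents in k, and let σ : Γ → Γ be a decreasing order-preserving embedding (σ injective, order-preserving, with σ(γ) < γ for all γ ∈ Γ). Then l_σ defined by l_σ(∏_γ x_γ^{g(γ)}) := Σ_γ g(γ)·x_{σ(γ)} is a prelogarithmic section of k((G)), and it satisfies v(l_σ(g)) < g in G for every g ∈ G^{>1}; more precisely, if x_γ := max supp g (as a monomial), then v(l_σ(g)) = x_{σ(γ)} < g. -/

import Mathlib

/-! Common framework: fields of generalized power series `k((G))` over a multiplicative
linearly ordered abelian group `G`, realized as Mathlib Hahn series over the additive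
order-dual of `G` (so that anti well-ordered supports in `G` become partially
well-ordered supports), with the anti-lexicographic order. -/

noncomputable section
open HahnSeries
open scoped Classical

/-- The additive order-dual copy of the multiplicative group `G`:
anti well-ordered subsets of `G` correspond to well-ordered subsets of `gdual G`. -/
abbrev gdual (G : Type*) [CommGroup G] [LinearOrder G] [IsOrderedMonoid G] : Type _ := Additive Gᵒᵈ

/-- View an element of `G` as an exponent (element of `gdual G`). -/
def toGd {G : Type*} [CommGroup G] [LinearOrder G] [IsOrderedMonoid G] (g : G) : gdual G :=
  Additive.ofMul (OrderDual.toDual g)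

/-- View an exponent (element of `gdual G`) as an element of `G`. -/
def toG {G : Type*} [CommGroup G] [LinearOrder G] [IsOrderedMonoid G] (γ : gdual G) : G :=
  OrderDual.ofDual (Additive.toMul γ)

section HahnOrder

variable {k : Type*} [Field k] [LinearOrder k] [IsStrictOrderedRing k] {Γ' : Type*} [LinearOrder Γ']

theorem hahn_leadingCoeff_neg (x : HahnSeries Γ' k) : (-x).leadingCoeff = -x.leadingCoeff := by
  by_cases h : x = 0
  · simp [h]
  · have hn : (-x) ≠ 0 := neg_ne_zero.2 h
    rw [HahnSeries.leadingCoeff_of_ne_zero h, HahnSeries.leadingCoeff_of_ne_zero hn,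
      HahnSeries.untop_orderTop_of_ne_zero h, HahnSeries.untop_orderTop_of_ne_zero hn]
    have hmin : (-x).isWF_support.min (HahnSeries.support_nonempty_iff.2 hn)
        = x.isWF_support.min (HahnSeries.support_nonempty_iff.2 h) := by
      apply le_antisymm
      · exact Set.IsWF.min_le _ _ (by
          rw [HahnSeries.support_neg (x := x)]
          exact x.isWF_support.min_mem (HahnSeries.support_nonempty_iff.2 h))
      · refine Set.IsWF.min_le _ _ ?_
        rw [← HahnSeries.support_neg (x := x)]
        exact (-x).isWF_support.min_mem (HahnSeries.support_nonempty_iff.2 hn)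
    rw [hmin, HahnSeries.coeff_neg]

theorem hahn_leadingCoeff_add_pos {a b : HahnSeries Γ' k}
    (ha : 0 < a.leadingCoeff) (hb : 0 < b.leadingCoeff) : 0 < (a + b).leadingCoeff := by
  have key : ∀ x y : HahnSeries Γ' k, 0 < x.leadingCoeff → 0 < y.leadingCoeff →
      ∀ (hx0 : x ≠ 0) (hy0 : y ≠ 0),
      x.isWF_support.min (HahnSeries.support_nonempty_iff.2 hx0) ≤
        y.isWF_support.min (HahnSeries.support_nonempty_iff.2 hy0) →
      0 < (x + y).leadingCoeff := by
    intro x y hx hy hx0 hy0 hle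
    set mx := x.isWF_support.min (HahnSeries.support_nonempty_iff.2 hx0) with hmx
    set my := y.isWF_support.min (HahnSeries.support_nonempty_iff.2 hy0) with hmy
    have hcx : x.coeff mx = x.leadingCoeff := by
      rw [HahnSeries.leadingCoeff_of_ne_zero hx0, HahnSeries.untop_orderTop_of_ne_zero hx0]
    have hcoeff : 0 < (x + y).coeff mx := by
      rcases lt_or_eq_of_le hle with hlt | heq
      · have hny : y.coeff mx = 0 := by
          by_contra hc
          exact absurd (Set.IsWF.min_le _ _ (by rwa [HahnSeries.mem_support])) (not_le.2 hlt)
        rw [HahnSeries.coeff_add, hny, add_zero, hcx]; exact hx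
      · have hcy : y.coeff mx = y.leadingCoeff := by
          rw [heq, HahnSeries.leadingCoeff_of_ne_zero hy0, HahnSeries.untop_orderTop_of_ne_zero hy0]
        rw [HahnSeries.coeff_add, hcx, hcy]; exact add_pos hx hy
    have hmem : mx ∈ (x + y).support := by
      rw [HahnSeries.mem_support]; exact ne_of_gt hcoeff
    have hxy0 : x + y ≠ 0 := HahnSeries.support_nonempty_iff.1 ⟨mx, hmem⟩
    have hminxy : (x + y).isWF_support.min (HahnSeries.support_nonempty_iff.2 hxy0) = mx := by
      apply le_antisymm (Set.IsWF.min_le _ _ hmem)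
      have hmm := (x + y).isWF_support.min_mem (HahnSeries.support_nonempty_iff.2 hxy0)
      rcases HahnSeries.support_add_subset _ _ hmm with hmem' | hmem'
      · exact Set.IsWF.min_le _ _ hmem'
      · exact le_trans hle (Set.IsWF.min_le _ _ hmem')
    rw [HahnSeries.leadingCoeff_of_ne_zero hxy0, HahnSeries.untop_orderTop_of_ne_zero hxy0, hminxy]
    exact hcoeff
  have ha0 : a ≠ 0 := by intro h; rw [h] at ha; simp at ha
  have hb0 : b ≠ 0 := by intro h; rw [h] at hb; simp at hb
  rcases le_total (a.isWF_support.min (HahnSeries.support_nonempty_iff.2 ha0))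
      (b.isWF_support.min (HahnSeries.support_nonempty_iff.2 hb0)) with hle | hle
  · exact key a b ha hb ha0 hb0 hle
  · rw [add_comm]; exact key b a hb ha hb0 ha0 hle

/-- The anti-lexicographic linear order on generalized power series:
`x` is positive iff its leading coefficient (the coefficient at the valuation `v x`,
i.e. at the largest element of the support) is positive. -/
instance instHahnLinearOrder : LinearOrder (HahnSeries Γ' k) where
  le x y := x = y ∨ 0 < (y - x).leadingCoeff
  lt x y := 0 < (y - x).leadingCoeff
  le_refl x := Or.inl rfl
  le_trans x y z hxy hyz := by
    rcases hxy with rfl | hxy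
    · exact hyz
    rcases hyz with rfl | hyz
    · exact Or.inr hxy
    · refine Or.inr ?_
      have := hahn_leadingCoeff_add_pos hyz hxy
      rwa [sub_add_sub_cancel] at this
  le_antisymm x y hxy hyx := by
    rcases hxy with rfl | hxy
    · rfl
    rcases hyx with rfl | hyx
    · rfl
    · exfalso
      have h1 : (x - y).leadingCoeff = -(y - x).leadingCoeff := by
        rw [← hahn_leadingCoeff_neg, neg_sub]
      rw [h1] at hyx
      exact absurd hxy (not_lt.2 (le_of_lt (neg_pos.1 hyx)))
  lt_iff_le_not_ge x y := by
    constructor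
    · intro h
      refine ⟨Or.inr h, ?_⟩
      rintro (rfl | h')
      · change 0 < (y - y).leadingCoeff at h
        rw [sub_self] at h
        simp at h
      · have h1 : (x - y).leadingCoeff = -(y - x).leadingCoeff := by
          rw [← hahn_leadingCoeff_neg, neg_sub]
        rw [h1] at h'
        exact absurd h (not_lt.2 (le_of_lt (neg_pos.1 h')))
    · rintro ⟨hle, hnot⟩
      rcases hle with rfl | h
      · exact absurd (Or.inl rfl) hnot
      · exact h
  le_total x y := by
    by_cases h : x = y
    · exact Or.inl (Or.inl h)
    · have h0 : y - x ≠ 0 := sub_ne_zero.2 (Ne.symm h)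
      have hlc : (y - x).leadingCoeff ≠ 0 := HahnSeries.leadingCoeff_ne_zero.2 h0
      rcases lt_or_gt_of_ne hlc with hneg | hpos
      · refine Or.inr (Or.inr ?_)
        rw [show x - y = -(y - x) from (neg_sub y x).symm, hahn_leadingCoeff_neg]
        exact neg_pos.2 hneg
      · exact Or.inl (Or.inr hpos)
  toDecidableLE := fun _ _ => Classical.dec _

/-- With the anti-lexicographic order, `k((G))` is a linearly ordered abelian group. -/
instance instHahnLOACG : IsOrderedAddMonoid (HahnSeries Γ' k) where
  add_le_add_left := by
    intro x y hxy c
    rcases hxy with rfl | h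
    · exact le_refl _
    · exact Or.inr (by rwa [add_sub_add_right_eq_sub])

theorem hahn_lt_iff (x y : HahnSeries Γ' k) : x < y ↔ 0 < (y - x).leadingCoeff := Iff.rfl

theorem hahn_single_pos (a : Γ') : (0 : HahnSeries Γ' k) < HahnSeries.single a 1 := by
  rw [hahn_lt_iff, sub_zero, HahnSeries.leadingCoeff_of_single]
  exact one_pos

theorem hahn_single_lt_single {a b : Γ'} (hab : b < a) :
    (HahnSeries.single a 1 : HahnSeries Γ' k) < HahnSeries.single b 1 := by
  rw [hahn_lt_iff]
  set δ : HahnSeries Γ' k := HahnSeries.single b 1 - HahnSeries.single a 1 with hδdef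
  have hne : b ≠ a := ne_of_lt hab
  have hb : δ.coeff b = 1 := by
    rw [hδdef, HahnSeries.coeff_sub, HahnSeries.coeff_single_same,
      HahnSeries.coeff_single_of_ne hne, sub_zero]
  have hbmem : b ∈ δ.support := by rw [HahnSeries.mem_support, hb]; exact one_ne_zero
  have hδ : δ ≠ 0 := HahnSeries.support_nonempty_iff.1 ⟨b, hbmem⟩
  have hsub : δ.support ⊆ {b, a} := by
    intro γ hγ
    rw [HahnSeries.mem_support] at hγ
    by_contra hγ'
    simp only [Set.mem_insert_iff, Set.mem_singleton_iff, not_or] at hγ'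
    apply hγ
    rw [hδdef, HahnSeries.coeff_sub, HahnSeries.coeff_single_of_ne hγ'.1,
      HahnSeries.coeff_single_of_ne hγ'.2, sub_zero]
  have hmin : δ.isWF_support.min (HahnSeries.support_nonempty_iff.2 hδ) = b := by
    have hmem := δ.isWF_support.min_mem (HahnSeries.support_nonempty_iff.2 hδ)
    have hle := δ.isWF_support.min_le (HahnSeries.support_nonempty_iff.2 hδ) hbmem
    rcases hsub hmem with h | h
    · exact h
    · exact absurd (h ▸ hle) (not_le.2 hab)
  rw [HahnSeries.leadingCoeff_of_ne_zero hδ, HahnSeries.untop_orderTop_of_ne_zero hδ, hmin, hb]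
  exact one_pos

end HahnOrder

section Series

variable {k : Type*} [Field k] [LinearOrder k] [IsStrictOrderedRing k] {G : Type*} [CommGroup G] [LinearOrder G] [IsOrderedMonoid G]

/-- The summable family `n ↦ (-1)^n/(n+1) • ε^(n+1)` (`ε` of positive order). -/
def logFamily (ε : HahnSeries (gdual G) k) (hε : 0 < ε.orderTop) :
    HahnSeries.SummableFamily (gdual G) k ℕ where
  toFun n := ((-1 : k) ^ n / ((n : k) + 1)) • ε ^ (n + 1)
  isPWO_iUnion_support' := by
    refine ((HahnSeries.SummableFamily.powers ε).isPWO_iUnion_support).mono ?_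
    intro γ hγ
    rw [Set.mem_iUnion] at hγ ⊢
    obtain ⟨n, hn⟩ := hγ
    refine ⟨n + 1, ?_⟩
    rw [HahnSeries.mem_support] at hn ⊢
    intro h
    apply hn
    show (((-1 : k) ^ n / ((n : k) + 1)) • ε ^ (n + 1)).coeff γ = 0
    rw [HahnSeries.coeff_smul]
    show ((-1 : k) ^ n / ((n : k) + 1)) • (ε ^ (n + 1)).coeff γ = 0
    rw [HahnSeries.SummableFamily.powers_of_orderTop_pos hε] at h
    rw [show (ε ^ (n + 1)).coeff γ = 0 from h, smul_zero]
  finite_co_support' g := by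
    have h := (HahnSeries.SummableFamily.powers ε).finite_co_support g
    refine Set.Finite.subset (h.preimage (Set.injOn_of_injective Nat.succ_injective)) ?_
    intro n hn
    simp only [Set.mem_preimage, Set.mem_setOf_eq] at hn ⊢
    intro h0
    apply hn
    show (((-1 : k) ^ n / ((n : k) + 1)) • ε ^ (n + 1)).coeff g = 0
    rw [HahnSeries.coeff_smul]
    have : ((HahnSeries.SummableFamily.powers ε) (Nat.succ n)).coeff g = 0 := h0
    rw [HahnSeries.SummableFamily.powers_of_orderTop_pos hε] at this
    rw [show (ε ^ (n + 1)).coeff g = 0 from this, smul_zero]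

/-- The logarithm on 1-units: `1 + ε ↦ Σ_{i ≥ 1} (-1)^(i-1) ε^i / i`
(for `ε` supported on `G^{<1}`; junk value `0` otherwise). -/
def logOneUnit (ε : HahnSeries (gdual G) k) : HahnSeries (gdual G) k :=
  if hε : 0 < ε.orderTop then (logFamily ε hε).hsum else 0

/-- The canonical extension of an order-preserving embedding `ψ : G₁ → G₂` to the fields of
generalized power series, applying `ψ` to every monomial (junk value `0` if `ψ` is not
order-preserving). -/
def extMap {k : Type*} [Field k] [LinearOrder k] [IsStrictOrderedRing k] {G₁ G₂ : Type*} [CommGroup G₁] [LinearOrder G₁] [IsOrderedMonoid G₁]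
    [CommGroup G₂] [LinearOrder G₂] [IsOrderedMonoid G₂] (ψ : G₁ → G₂) :
    HahnSeries (gdual G₁) k → HahnSeries (gdual G₂) k :=
  if h : StrictMono ψ then
    HahnSeries.embDomain
      (OrderEmbedding.ofStrictMono (fun γ => toGd (ψ (toG γ)))
        (fun a b hab => show toGd (ψ (toG a)) < toGd (ψ (toG b)) from
          h (show toG b < toG a from hab)))
  else fun _ => 0

/-- The additive subgroup `k((G^{>1}))` of the series supported on `G^{>1}`. -/
def largeSeries (k : Type*) [Field k] [LinearOrder k] [IsStrictOrderedRing k] (G : Type*) [CommGroup G] [LinearOrder G] [IsOrderedMonoid G] :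
    AddSubgroup (HahnSeries (gdual G) k) where
  carrier := {f | ∀ γ ∈ f.support, γ < (0 : gdual G)}
  zero_mem' := by intro γ hγ; rw [HahnSeries.support_zero] at hγ; exact absurd hγ (Set.notMem_empty γ)
  add_mem' := by
    intro a b ha hb γ hγ
    rcases HahnSeries.support_add_subset _ _ hγ with h | h
    exacts [ha γ h, hb γ h]
  neg_mem' := by
    intro a ha γ hγ
    rw [HahnSeries.support_neg] at hγ
    exact ha γ hγ

theorem mem_largeSeries {f : HahnSeries (gdual G) k} :
    f ∈ largeSeries k G ↔ ∀ γ ∈ f.support, γ < (0 : gdual G) := Iff.rfl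

/-- `log : (k^{>0}, ·) → (k, +)` is an order-preserving group embedding. -/
structure IsResidueLog (lg : k → k) : Prop where
  map_mul : ∀ a b : k, 0 < a → 0 < b → lg (a * b) = lg a + lg b
  strictMonoOn : StrictMonoOn lg (Set.Ioi 0)

/-- A prelogarithmic section of `k((G))`: an order-preserving group embedding
`l : (G, ·) → (k((G^{>1})), +)`. -/
structure IsPrelogSection (l : G → HahnSeries (gdual G) k) : Prop where
  supp_large : ∀ g : G, l g ∈ largeSeries k G
  map_mul : ∀ g h : G, l (g * h) = l g + l h
  strictMono : StrictMono l

/-- The prelogarithm associated to a prelogarithmic section `l` and a logarithm `lg` on the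
residue field: `L(g·a·(1+ε)) = l(g) + log(a) + Σ (-1)^(i-1) ε^i/i`. -/
def prelogL (lg : k → k) (l : G → HahnSeries (gdual G) k)
    (α : HahnSeries (gdual G) k) : HahnSeries (gdual G) k :=
  l (toG α.order) + HahnSeries.C (lg α.leadingCoeff) +
    logOneUnit ((HahnSeries.single α.order α.leadingCoeff)⁻¹ * α - 1)

/-- The group of exponentials `G^# = e[k((G^{>1}))]`, a multiplicative copy of the ordered
additive group `k((G^{>1}))`. The element `e(α)` is `Multiplicative.ofAdd ⟨α, _⟩`. -/
abbrev Gsharp (k : Type*) [Field k] [LinearOrder k] [IsStrictOrderedRing k] (G : Type*) [CommGroup G] [LinearOrder G] [IsOrderedMonoid G] :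
    Type _ := Multiplicative ↥(largeSeries k G)

/-- The embedding `ι : G → G^#`, `ι(g) := e(l(g))`. -/
def iotaSharp (l : G → HahnSeries (gdual G) k) (hl : ∀ g, l g ∈ largeSeries k G) (g : G) :
    Gsharp k G :=
  Multiplicative.ofAdd (⟨l g, hl g⟩ : ↥(largeSeries k G))

/-- The prelogarithmic section `l^#` of `k((G^#))`: `l^#(e(α)) := ι(α)`, where
`ι : k((G)) → k((G^#))` is the canonical extension of `ι : G → G^#`. -/
def lsharpFun (l : G → HahnSeries (gdual G) k) (hl : ∀ g, l g ∈ largeSeries k G)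
    (x : Gsharp k G) : HahnSeries (gdual (Gsharp k G)) k :=
  extMap (iotaSharp l hl) ((Multiplicative.toAdd x : ↥(largeSeries k G)) : HahnSeries (gdual G) k)

/-- The induced map `ψ^# : G₁^# → G₂^#`, `ψ^#(e(α)) := e(ψ(α))` (junk value `1` if the
canonical extension of `ψ` does not map `k((G₁^{>1}))` into `k((G₂^{>1}))`). -/
def psiSharp {k : Type*} [Field k] [LinearOrder k] [IsStrictOrderedRing k] {G₁ G₂ : Type*} [CommGroup G₁] [LinearOrder G₁] [IsOrderedMonoid G₁]
    [CommGroup G₂] [LinearOrder G₂] [IsOrderedMonoid G₂] (ψ : G₁ → G₂) (x : Gsharp k G₁) : Gsharp k G₂ :=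
  if h : ∀ f ∈ largeSeries k G₁, extMap ψ f ∈ largeSeries k G₂ then
    Multiplicative.ofAdd
      (⟨extMap ψ ((Multiplicative.toAdd x : ↥(largeSeries k G₁)) : HahnSeries (gdual G₁) k),
        h _ (Multiplicative.toAdd x).2⟩ : ↥(largeSeries k G₂))
  else 1

/-- Condition (†) for subgroups `U ⊆ H` of `G`:
`l(H) < |f|` for every nonzero `f ∈ k((H^{>U}))`. -/
def CondDagger (l : G → HahnSeries (gdual G) k) (U H : Subgroup G) : Prop :=
  ∀ h ∈ H, ∀ f : HahnSeries (gdual G) k, f ≠ 0 →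
    (∀ γ ∈ f.support, toG γ ∈ H ∧ ∀ u ∈ U, u < toG γ) → l h < |f|

/-- The growth axiom for a subgroup `H` of `G`:
`l(H) < |f|` for every nonzero `f ∈ k((H^{>1}))`. -/
def GrowthAxiom (l : G → HahnSeries (gdual G) k) (H : Subgroup G) : Prop :=
  CondDagger l (⊥ : Subgroup G) H

theorem mem_large_of_gt {f : HahnSeries (gdual G) k} {U H : Subgroup G}
    (hf : ∀ γ ∈ f.support, toG γ ∈ H ∧ ∀ u ∈ U, u < toG γ) : f ∈ largeSeries k G :=
  fun γ hγ => show (1 : G) < toG γ from (hf γ hγ).2 1 U.one_mem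

/-- The set `H^{#,U} = ι(H)·e[k((H^{>U}))] ⊆ G^#`. -/
def sharpProdSet (l : G → HahnSeries (gdual G) k) (hl : ∀ g, l g ∈ largeSeries k G)
    (U H : Subgroup G) : Set (Gsharp k G) :=
  {x | ∃ h ∈ H, ∃ f : HahnSeries (gdual G) k,
    ∃ hf : ∀ γ ∈ f.support, toG γ ∈ H ∧ ∀ u ∈ U, u < toG γ,
    x = iotaSharp l hl h *
      Multiplicative.ofAdd (⟨f, mem_large_of_gt hf⟩ : ↥(largeSeries k G))}

end Series

section Hahn

variable (k : Type*) [Field k] [LinearOrder k] [IsStrictOrderedRing k] {Γ : Type*} [LinearOrder Γ]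

/-- The Hahn group `Γ^k` of formal products `∏_γ x_γ^(g γ)` with anti well-ordered support,
ordered anti-lexicographically, realized as the multiplicative copy of the additive group of
Hahn series over `Γᵒᵈ` with coefficients in `k`. -/
abbrev HahnGroup (Γ : Type*) [LinearOrder Γ] (k : Type*) [Field k] [LinearOrder k] [IsStrictOrderedRing k] : Type _ :=
  Multiplicative (HahnSeries Γᵒᵈ k)

/-- The monomial `x_γ` in the Hahn group `Γ^k`. -/
def xMon (γ : Γ) : HahnGroup Γ k :=
  Multiplicative.ofAdd (HahnSeries.single (OrderDual.toDual γ) (1 : k))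

/-- The prelogarithmic section `l_σ` on `k((Γ^k))` induced by `σ : Γ → Γ`:
`l_σ(∏_γ x_γ^(g γ)) := Σ_γ (g γ)·x_(σ γ)` (junk value `0` if `σ` is not strictly
order-preserving). -/
def sigmaSection (σ : Γ → Γ) :
    HahnGroup Γ k → HahnSeries (gdual (HahnGroup Γ k)) k :=
  if hσ : StrictMono σ then fun g =>
    HahnSeries.embDomain
      (OrderEmbedding.ofStrictMono
        (fun γ : Γᵒᵈ => toGd (xMon k (σ (OrderDual.ofDual γ))))
        (fun a b hab =>
          show toGd (xMon k (σ (OrderDual.ofDual a))) < toGd (xMon k (σ (OrderDual.ofDual b)))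
          from hahn_single_lt_single
            (show OrderDual.toDual (σ (OrderDual.ofDual a)) <
                OrderDual.toDual (σ (OrderDual.ofDual b)) from
              hσ (show OrderDual.ofDual b < OrderDual.ofDual a from hab))))
      (Multiplicative.toAdd g)
  else fun _ => 0

/-- The lift `ψ_σ : Γ^k → Γ^k` of `σ : Γ → Γ`, `ψ_σ(∏_γ x_γ^(g γ)) := ∏_γ x_(σ γ)^(g γ)`
(junk value `id` if `σ` is not strictly order-preserving). -/
def sigmaAuto (σ : Γ → Γ) : HahnGroup Γ k → HahnGroup Γ k :=
  if hσ : StrictMono σ then fun g =>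
    Multiplicative.ofAdd
      (HahnSeries.embDomain
        (OrderEmbedding.ofStrictMono
          (fun γ : Γᵒᵈ => OrderDual.toDual (σ (OrderDual.ofDual γ)))
          (fun a b hab =>
            show OrderDual.toDual (σ (OrderDual.ofDual a)) <
                OrderDual.toDual (σ (OrderDual.ofDual b)) from
              hσ (show OrderDual.ofDual b < OrderDual.ofDual a from hab)))
        (Multiplicative.toAdd g))
  else id

end Hahn

/-! `l_σ` is `HahnSeries.embDomain` along the order embedding `γ ↦ x_(σ γ)` of exponents, so it
is additive and preserves leading coefficients, hence strictly monotone, and its image is supported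
on the monomials `x_(σ γ) > 1`. For `g > 1` with leading exponent `γ`, the valuation of `l_σ(g)` is
`x_(σ γ)`; since `σ γ < γ`, the difference `g / x_(σ γ)` keeps the positive leading coefficient
of `g`. -/

section HahnSeriesOrder

variable {k : Type*} [Field k] [LinearOrder k] [IsStrictOrderedRing k]

theorem hahn_lt_iff_toLex_lt {Γ' : Type*} [LinearOrder Γ'] (x y : HahnSeries Γ' k) :
    x < y ↔ toLex x < toLex y := by
  rw [hahn_lt_iff, ← sub_pos (a := toLex y), ← HahnSeries.leadingCoeff_pos_iff]
  rfl

theorem strictMono_embDomain {A B : Type*} [LinearOrder A] [LinearOrder B] (f : A ↪o B) :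
    StrictMono (HahnSeries.embDomain f : HahnSeries A k → HahnSeries B k) := fun x y hxy => by
  rw [hahn_lt_iff_toLex_lt] at hxy ⊢
  exact (HahnSeries.embDomainOrderEmbedding f).lt_iff_lt.2 hxy

theorem order_embDomain_of_orderTop_eq {R A B : Type*} [Zero R] [LinearOrder A] [LinearOrder B]
    [Zero B] {f : A ↪o B} {x : HahnSeries A R} {a : A} (ha : x.orderTop = a) :
    (HahnSeries.embDomain f x).order = f a := by
  have hx : x ≠ 0 := HahnSeries.orderTop_ne_top.1 (ha ▸ WithTop.coe_ne_top)
  have hfx : HahnSeries.embDomain f x ≠ 0 := fun h =>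
    hx (HahnSeries.embDomain_injective (h.trans HahnSeries.embDomain_zero.symm))
  apply WithTop.coe_injective
  rw [HahnSeries.order_eq_orderTop_of_ne_zero hfx, HahnSeries.orderTop_embDomain, ha]
  rfl

theorem single_one_lt_of_orderTop_lt {Γ' : Type*} [LinearOrder Γ'] {x : HahnSeries Γ' k}
    {b : Γ'} (hx : 0 < x) (hb : x.orderTop < b) : HahnSeries.single b 1 < x := by
  have hlt : x.orderTop < (HahnSeries.single b (1 : k)).orderTop := by
    rwa [HahnSeries.orderTop_single one_ne_zero]
  rw [hahn_lt_iff, HahnSeries.leadingCoeff_sub hlt]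
  simpa [hahn_lt_iff] using hx

end HahnSeriesOrder

section SigmaSection

variable (k : Type*) [Field k] [LinearOrder k] [IsStrictOrderedRing k] {Γ : Type*} [LinearOrder Γ]

theorem one_lt_xMon (γ : Γ) : 1 < xMon k γ := hahn_single_pos _

theorem xMon_lt_of_orderTop_lt {g : HahnGroup Γ k} (hg : 1 < g) {γ : Γ}
    (hγ : (Multiplicative.toAdd g).orderTop < OrderDual.toDual γ) : xMon k γ < g :=
  single_one_lt_of_orderTop_lt (Multiplicative.toAdd_lt.2 hg) hγ

variable {σ : Γ → Γ}

def sigmaEmb (hσ : StrictMono σ) : Γᵒᵈ ↪o gdual (HahnGroup Γ k) :=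
  OrderEmbedding.ofStrictMono (fun γ => toGd (xMon k (σ (OrderDual.ofDual γ))))
    (fun _ _ hab => hahn_single_lt_single (hσ hab))

theorem sigmaSection_eq_embDomain (hσ : StrictMono σ) (g : HahnGroup Γ k) :
    sigmaSection k σ g = HahnSeries.embDomain (sigmaEmb k hσ) (Multiplicative.toAdd g) := by
  rw [sigmaSection, dif_pos hσ]
  rfl

theorem isPrelogSection_sigmaSection (hσ : StrictMono σ) : IsPrelogSection (sigmaSection k σ) where
  supp_large g γ hγ := by
    rw [sigmaSection_eq_embDomain k hσ] at hγ
    obtain ⟨a, -, rfl⟩ := HahnSeries.support_embDomain_subset hγ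
    exact one_lt_xMon k _
  map_mul g h := by
    simp only [sigmaSection_eq_embDomain k hσ, toAdd_mul, HahnSeries.embDomain_add]
  strictMono a b hab := by
    simp only [sigmaSection_eq_embDomain k hσ]
    exact strictMono_embDomain _ (Multiplicative.toAdd_lt.2 hab)

theorem coeff_sigmaSection_xMon (hσ : StrictMono σ) (g : HahnGroup Γ k) (γ : Γ) :
    (sigmaSection k σ g).coeff (toGd (xMon k (σ γ))) =
      (Multiplicative.toAdd g).coeff (OrderDual.toDual γ) := by
  rw [sigmaSection_eq_embDomain k hσ]
  exact HahnSeries.embDomain_coeff (a := OrderDual.toDual γ)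

theorem order_sigmaSection (hσ : StrictMono σ) {g : HahnGroup Γ k} {γ : Γ}
    (hγ : (Multiplicative.toAdd g).orderTop = OrderDual.toDual γ) :
    (sigmaSection k σ g).order = toGd (xMon k (σ γ)) := by
  rw [sigmaSection_eq_embDomain k hσ]
  exact order_embDomain_of_orderTop_eq hγ

end SigmaSection

/-- Let `G := Γ^k` be the Hahn group and `σ : Γ → Γ` a decreasing
order-preserving embedding.  Then `l_σ(∏_γ x_γ^(g γ)) := Σ_γ (g γ)·x_(σ γ)` (realized as
`sigmaSection k σ`, whose coefficient at `x_(σ γ)` is `g γ`) is a prelogarithmic section of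
`k((G))`, and `v(l_σ(g)) < g` for every `g ∈ G^{>1}`; more precisely, if `γm` is the
maximal element of the support of `g` (i.e. its minimum in `Γᵒᵈ`), then
`v(l_σ(g)) = x_(σ γm) < g`. -/
theorem sigma_section_is_prelogarithmic_GA {k : Type*} [Field k] [LinearOrder k] [IsStrictOrderedRing k]
    {Γ : Type*} [LinearOrder Γ] (σ : Γ → Γ)
    (hmono : StrictMono σ) (hdec : ∀ γ : Γ, σ γ < γ) :
    IsPrelogSection (sigmaSection k σ) ∧
    (∀ (g : HahnGroup Γ k) (γ : Γ),
      (sigmaSection k σ g).coeff (toGd (xMon k (σ γ))) =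
        (Multiplicative.toAdd g).coeff (OrderDual.toDual γ)) ∧
    (∀ g : HahnGroup Γ k, 1 < g →
      ∃ γm : Γᵒᵈ, γm ∈ (Multiplicative.toAdd g).support ∧
        (∀ γ' ∈ (Multiplicative.toAdd g).support, γm ≤ γ') ∧
        (sigmaSection k σ g).order = toGd (xMon k (σ (OrderDual.ofDual γm))) ∧
        toG ((sigmaSection k σ g).order) < g) := by
  refine ⟨isPrelogSection_sigmaSection k hmono, coeff_sigmaSection_xMon k hmono, fun g hg => ?_⟩
  have hg0 : (Multiplicative.toAdd g).support.Nonempty :=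
    HahnSeries.support_nonempty_iff.2 (toAdd_eq_zero.not.2 hg.ne')
  have hγm := HahnSeries.orderTop_of_ne_zero (HahnSeries.support_nonempty_iff.1 hg0)
  have horder := order_sigmaSection k hmono hγm
  refine ⟨_, (Multiplicative.toAdd g).isWF_support.min_mem hg0,
    fun γ' hγ' => (Multiplicative.toAdd g).isWF_support.min_le hg0 hγ', horder, ?_⟩
  rw [horder]
  exact xMon_lt_of_orderTop_lt k hg (hγm.trans_lt (WithTop.coe_lt_coe.2 (hdec _)))

end
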